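/- Let G be a digraph and let C1, C2 be two distinct maximal 2-vertex-connected subgraphs of G. Then the vertex sets of C1 and C2 share at most one vertex. -/

import Mathlib

/-!
If two 2-vertex-connected vertex sets share two vertices, their union is again
2-vertex-connected: after deleting any vertex `x`, both parts stay strongly connected and
still share a vertex other than `x`, through which they glue. Maximality then forces two
distinct maximal sets to meet in at most one vertex.
-/

variable {V : Type*}

/-- Reachability by a directed path staying inside the vertex set `C`. -/
def ReachIn (E : Set (V × V)) (C : Set V) (a b : V) : Prop :=
  Relation.ReflTransGen (fun p q => p ∈ C ∧ q ∈ C ∧ (p, q) ∈ E) a b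

/-- The subgraph induced by `C` is strongly connected. -/
def StronglyConnIn (E : Set (V × V)) (C : Set V) : Prop :=
  ∀ a ∈ C, ∀ b ∈ C, ReachIn E C a b

/-- `C` induces a 2-vertex-connected subgraph: at least three vertices,
strongly connected, and no strong articulation point. -/
def Is2VCS (E : Set (V × V)) (C : Set V) : Prop :=
  (∃ a ∈ C, ∃ b ∈ C, ∃ c ∈ C, a ≠ b ∧ a ≠ c ∧ b ≠ c) ∧
    StronglyConnIn E C ∧ ∀ x ∈ C, StronglyConnIn E (C \ {x})

/-- `C` induces a maximal 2-vertex-connected subgraph. -/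
def IsMax2VCS (E : Set (V × V)) (C : Set V) : Prop :=
  Is2VCS E C ∧ ∀ D : Set V, C ⊂ D → ¬ Is2VCS E D

section

variable {E : Set (V × V)}

lemma ReachIn.mono {C D : Set V} (h : C ⊆ D) {a b : V} (hr : ReachIn E C a b) :
    ReachIn E D a b :=
  Relation.ReflTransGen.mono (r := fun p q => p ∈ C ∧ q ∈ C ∧ (p, q) ∈ E)
    (fun _ _ ⟨hp, hq, he⟩ => ⟨h hp, h hq, he⟩) _ _ hr

lemma StronglyConnIn.union {C D : Set V} (hC : StronglyConnIn E C) (hD : StronglyConnIn E D)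
    {v : V} (hvC : v ∈ C) (hvD : v ∈ D) : StronglyConnIn E (C ∪ D) := by
  have through_v : ∀ a ∈ C ∪ D, ReachIn E (C ∪ D) a v ∧ ReachIn E (C ∪ D) v a := by
    rintro a (ha | ha)
    · exact ⟨(hC a ha v hvC).mono Set.subset_union_left,
        (hC v hvC a ha).mono Set.subset_union_left⟩
    · exact ⟨(hD a ha v hvD).mono Set.subset_union_right,
        (hD v hvD a ha).mono Set.subset_union_right⟩
  intro a ha b hb
  exact (through_v a ha).1.trans (through_v b hb).2

lemma Is2VCS.stronglyConnIn_diff_singleton {C : Set V} (h : Is2VCS E C) (x : V) :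
    StronglyConnIn E (C \ {x}) := by
  by_cases hx : x ∈ C
  · exact h.2.2 x hx
  · rw [Set.sdiff_singleton_eq_self hx]
    exact h.2.1

lemma Is2VCS.union {C₁ C₂ : Set V} (h₁ : Is2VCS E C₁) (h₂ : Is2VCS E C₂)
    {u v : V} (hu : u ∈ C₁ ∩ C₂) (hv : v ∈ C₁ ∩ C₂) (huv : u ≠ v) :
    Is2VCS E (C₁ ∪ C₂) := by
  obtain ⟨a, ha, b, hb, c, hc, hab, hac, hbc⟩ := h₁.1
  refine ⟨⟨a, Or.inl ha, b, Or.inl hb, c, Or.inl hc, hab, hac, hbc⟩,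
    h₁.2.1.union h₂.2.1 hu.1 hu.2, fun x _ => ?_⟩
  obtain ⟨w, hw, hwx⟩ : ∃ w ∈ C₁ ∩ C₂, w ≠ x := by
    rcases eq_or_ne u x with rfl | hux
    · exact ⟨v, hv, huv.symm⟩
    · exact ⟨u, hu, hux⟩
  rw [Set.union_sdiff_distrib]
  exact (h₁.stronglyConnIn_diff_singleton x).union (h₂.stronglyConnIn_diff_singleton x)
    ⟨hw.1, hwx⟩ ⟨hw.2, hwx⟩

lemma IsMax2VCS.eq_of_is2VCS_union {C₁ C₂ : Set V} (h₁ : IsMax2VCS E C₁)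
    (h₂ : IsMax2VCS E C₂) (hU : Is2VCS E (C₁ ∪ C₂)) : C₁ = C₂ := by
  by_contra hne
  by_cases hsub : C₂ ⊆ C₁
  · exact h₂.2 C₁ (hsub.ssubset_of_ne (Ne.symm hne)) h₁.1
  · exact h₁.2 _ (Set.ssubset_union_left_iff.mpr hsub) hU

end

theorem stmt15_general (E : Set (V × V)) (C₁ C₂ : Set V)
    (h₁ : IsMax2VCS E C₁) (h₂ : IsMax2VCS E C₂) (hne : C₁ ≠ C₂) :
    (C₁ ∩ C₂).Subsingleton := by
  intro u hu v hv
  by_contra huv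
  exact hne (h₁.eq_of_is2VCS_union h₂ (h₁.1.union h₂.1 hu hv huv))

theorem stmt15 [Fintype V] (E : Set (V × V)) (C₁ C₂ : Set V)
    (h₁ : IsMax2VCS E C₁) (h₂ : IsMax2VCS E C₂) (hne : C₁ ≠ C₂) :
    (C₁ ∩ C₂).Subsingleton :=
  stmt15_general E C₁ C₂ h₁ h₂ hne
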